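/- arXiv:1304.2677 — 5 statements merged into one kernel-verified Lean document; each statement's English description precedes it below -/
import Mathlib

section
/- For every ξ ∈ ℝ, (∫₀^∞ P(t) e^{−αt} t^{−iξ} dt) / (∫₀^∞ e^{−t} t^{−iξ} dt) = α^{iξ} · Σ_{k=0}^{K} q_k (iξ)^k. -/
/-!
For `t > 0` the integrand is a combination of `t ^ (s - 1) * exp (-(α * t))` with
`s = k + 1 - iξ`, whose integral is `Γ(s) α^(-s)`: Mathlib has this for real `α > 0`, and both sides
are holomorphic in `α` on `Re α > 0`, so the identity theorem extends it. The functional equation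
gives `Γ(k + 1 - iξ) = ∏_{j=1}^{k} (j - iξ) · Γ(1 - iξ)`; after dividing by `Γ(1 - iξ)`, expanding
the product in powers of `iξ` through `ν` and exchanging the two sums produces the `q_k`.
-/

open MeasureTheory Complex Polynomial

/-- The coefficients `ν ℓ k` defined by `∏_{j=1}^{k} (j − z) = Σ_{ℓ=0}^{k} ν ℓ k · z^ℓ`
(the empty product being `1`, so `ν 0 0 = 1`). -/
noncomputable def nuCoeff (ℓ k : ℕ) : ℂ :=
  (∏ j ∈ Finset.Icc 1 k, (Polynomial.C (j : ℂ) - Polynomial.X)).coeff ℓ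

open Set Filter Finset Topology

section GammaIntegral

variable {s γ : ℂ}

lemma norm_ofReal_cpow_mul_exp_neg_mul {t : ℝ} (ht : 0 < t) :
    ‖(t : ℂ) ^ s * exp (-(γ * t))‖ = t ^ s.re * Real.exp (-γ.re * t) := by
  rw [norm_mul, norm_exp, norm_cpow_eq_rpow_re_of_pos ht]
  simp

lemma integrableOn_cpow_mul_exp_neg_mul_Ioi (hs : 0 < s.re) (hγ : 0 < γ.re) :
    IntegrableOn (fun t : ℝ => (t : ℂ) ^ (s - 1) * exp (-(γ * t))) (Ioi 0) := by
  have hmeas : AEStronglyMeasurable (fun t : ℝ => (t : ℂ) ^ (s - 1) * exp (-(γ * t)))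
      (volume.restrict (Ioi 0)) :=
    (ContinuousOn.mul (fun t ht => (continuousAt_ofReal_cpow_const t (s - 1)
      (Or.inr ht.ne')).continuousWithinAt) (by fun_prop)).aestronglyMeasurable
      measurableSet_Ioi
  refine Integrable.mono' (g := fun t : ℝ => t ^ (s.re - 1) * Real.exp (-γ.re * t)) ?_ hmeas ?_
  · simpa [Real.rpow_one, IntegrableOn] using
      integrableOn_rpow_mul_exp_neg_mul_rpow (p := 1) (by linarith) zero_lt_one hγ
  · filter_upwards [ae_restrict_mem measurableSet_Ioi] with t ht
    rw [norm_ofReal_cpow_mul_exp_neg_mul ht, sub_re, one_re]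

lemma hasDerivAt_integral_cpow_mul_exp_neg_mul (hs : 0 < s.re) (hγ : 0 < γ.re) :
    HasDerivAt (fun γ : ℂ => ∫ t in Ioi (0 : ℝ), (t : ℂ) ^ (s - 1) * exp (-(γ * t)))
      (∫ t in Ioi (0 : ℝ), -((t : ℂ) ^ s * exp (-(γ * t)))) γ := by
  set ε := γ.re / 2 with hε_def
  have hε : 0 < ε := by positivity
  have re_ball : ∀ z ∈ Metric.ball γ ε, ε < z.re := fun z hz => by
    have := (abs_lt.mp ((abs_re_le_norm (z - γ)).trans_lt (mem_ball_iff_norm.mp hz))).1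
    rw [sub_re] at this
    linarith [hε_def]
  refine (hasDerivAt_integral_of_dominated_loc_of_deriv_le (μ := volume.restrict (Ioi 0))
    (F := fun γ (t : ℝ) => (t : ℂ) ^ (s - 1) * exp (-(γ * t)))
    (F' := fun γ (t : ℝ) => -((t : ℂ) ^ s * exp (-(γ * t))))
    (bound := fun t : ℝ => t ^ s.re * Real.exp (-ε * t)) (Metric.ball_mem_nhds γ hε)
    ?_ (integrableOn_cpow_mul_exp_neg_mul_Ioi hs hγ) ?_ ?_ ?_ ?_).2
  · filter_upwards [Metric.ball_mem_nhds γ hε] with z hz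
    exact (integrableOn_cpow_mul_exp_neg_mul_Ioi hs (hε.trans (re_ball z hz))).aestronglyMeasurable
  · simpa [Pi.neg_def] using (integrableOn_cpow_mul_exp_neg_mul_Ioi (s := s + 1)
      (by simp; linarith) hγ).neg.aestronglyMeasurable
  · filter_upwards [ae_restrict_mem measurableSet_Ioi] with t (ht : 0 < t) z hz
    rw [norm_neg, norm_ofReal_cpow_mul_exp_neg_mul ht]
    gcongr
    exact (re_ball z hz).le
  · simpa [Real.rpow_one, IntegrableOn] using
      integrableOn_rpow_mul_exp_neg_mul_rpow (p := 1) (by linarith) zero_lt_one hε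
  · filter_upwards [ae_restrict_mem measurableSet_Ioi] with t (ht : 0 < t) z _
    have ht0 : (t : ℂ) ≠ 0 := ofReal_ne_zero.mpr ht.ne'
    refine (((hasDerivAt_mul_const (t : ℂ)).neg.cexp).const_mul _).congr_deriv ?_
    simp only [Pi.neg_apply]
    rw [show s = (s - 1) + 1 by ring, cpow_add _ _ ht0, cpow_one, sub_add_cancel]
    ring

lemma integral_cpow_mul_exp_neg_mul_Ioi_of_re_pos (hs : 0 < s.re) (hγ : 0 < γ.re) :
    ∫ t in Ioi (0 : ℝ), (t : ℂ) ^ (s - 1) * exp (-(γ * t)) = Gamma s * γ ^ (-s) := by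
  set U : Set ℂ := {z | 0 < z.re}
  have hU : IsOpen U := isOpen_lt continuous_const continuous_re
  have lhs_analytic : AnalyticOnNhd ℂ
      (fun γ : ℂ => ∫ t in Ioi (0 : ℝ), (t : ℂ) ^ (s - 1) * exp (-(γ * t))) U :=
    DifferentiableOn.analyticOnNhd (fun z hz =>
      (hasDerivAt_integral_cpow_mul_exp_neg_mul hs hz).differentiableAt.differentiableWithinAt) hU
  have rhs_analytic : AnalyticOnNhd ℂ (fun γ : ℂ => Gamma s * γ ^ (-s)) U :=
    DifferentiableOn.analyticOnNhd (fun z hz => ((differentiableAt_id.cpow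
      (differentiableAt_const _) (Or.inl hz)).const_mul _).differentiableWithinAt) hU
  have eq_on_reals : ∀ r : ℝ, 0 < r → ∫ t in Ioi (0 : ℝ), (t : ℂ) ^ (s - 1) * exp (-(r * t)) =
      Gamma s * (r : ℂ) ^ (-s) := fun r hr => by
    rw [integral_cpow_mul_exp_neg_mul_Ioi hs hr, mul_comm, one_div,
      inv_cpow _ _ (by simpa [arg_ofReal_of_nonneg hr.le] using Real.pi_ne_zero.symm), cpow_neg]
  have ofReal_tendsto : Tendsto ((↑) : ℝ → ℂ) (𝓝[≠] 1) (𝓝[≠] 1) :=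
    continuous_ofReal.continuousWithinAt.tendsto_nhdsWithin
      fun r hr => by simpa using hr
  have eq_frequently : ∃ᶠ z in 𝓝[≠] (1 : ℂ), ∫ t in Ioi (0 : ℝ), (t : ℂ) ^ (s - 1) *
      exp (-(z * t)) = Gamma s * z ^ (-s) :=
    ofReal_tendsto.frequently (((eventually_nhdsWithin_of_eventually_nhds
      (Ioi_mem_nhds one_pos)).mono eq_on_reals).frequently (f := 𝓝[≠] (1 : ℝ)))
  exact lhs_analytic.eqOn_of_preconnected_of_frequently_eq rhs_analytic
    (convex_halfSpace_re_gt 0).isPreconnected (by simp [U]) eq_frequently hγ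

end GammaIntegral

section PolynomialKernel

variable {α w : ℂ}

lemma ofReal_pow_mul_exp_mul_exp_log_eq {t : ℝ} (ht : 0 < t) (k : ℕ) :
    (t : ℂ) ^ k * exp (-α * t) * exp (-w * Real.log t) =
      (t : ℂ) ^ ((k + 1 - w) - 1) * exp (-(α * t)) := by
  have ht0 : (t : ℂ) ≠ 0 := ofReal_ne_zero.mpr ht.ne'
  rw [show (k + 1 - w) - 1 = (k : ℂ) + -w by ring, cpow_add _ _ ht0, cpow_natCast,
    cpow_def_of_ne_zero ht0, ← ofReal_log ht.le]
  ring_nf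

lemma integrableOn_pow_mul_exp_mul_exp_log (hw : w.re < 1) (hα : 0 < α.re) (k : ℕ) :
    IntegrableOn (fun t : ℝ => (t : ℂ) ^ k * exp (-α * t) * exp (-w * Real.log t)) (Ioi 0) :=
  (integrableOn_cpow_mul_exp_neg_mul_Ioi (by simp; linarith) hα).congr_fun
    (fun _ ht => (ofReal_pow_mul_exp_mul_exp_log_eq ht k).symm) measurableSet_Ioi

lemma integral_pow_mul_exp_mul_exp_log (hw : w.re < 1) (hα : 0 < α.re) (k : ℕ) :
    ∫ t in Ioi (0 : ℝ), (t : ℂ) ^ k * exp (-α * t) * exp (-w * Real.log t) =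
      Gamma (k + 1 - w) * α ^ (-(k + 1 - w)) := by
  rw [setIntegral_congr_fun measurableSet_Ioi fun _ ht => ofReal_pow_mul_exp_mul_exp_log_eq ht k,
    integral_cpow_mul_exp_neg_mul_Ioi_of_re_pos (by simp; linarith) hα]

lemma Gamma_natCast_add_one_sub (hw : w.re < 1) (k : ℕ) :
    Gamma (k + 1 - w) = (∏ j ∈ Icc 1 k, ((j : ℂ) - w)) * Gamma (1 - w) := by
  induction k with
  | zero => simp
  | succ n ih =>
    have hne : (n : ℂ) + 1 - w ≠ 0 := fun h => by
      have := congrArg re h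
      simp at this
      linarith [n.cast_nonneg (α := ℝ)]
    rw [Nat.cast_succ, show (n : ℂ) + 1 + 1 - w = (n + 1 - w) + 1 by ring, Gamma_add_one _ hne, ih,
      prod_Icc_succ_top (by omega), Nat.cast_succ]
    ring

lemma prod_Icc_natCast_sub_eq_sum_nuCoeff (k : ℕ) (w : ℂ) :
    ∏ j ∈ Icc 1 k, ((j : ℂ) - w) = ∑ ℓ ∈ range (k + 1), nuCoeff ℓ k * w ^ ℓ := by
  have hdeg : (∏ j ∈ Icc 1 k, (C (j : ℂ) - X)).natDegree < k + 1 := by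
    refine Nat.lt_succ_of_le ((natDegree_prod_le _ _).trans ?_)
    refine (sum_le_card_nsmul _ _ 1 fun j _ => ?_).trans (by simp)
    exact (natDegree_sub_le _ _).trans (by simp)
  simpa [eval_prod, nuCoeff] using eval_eq_sum_range' hdeg w

lemma sum_mul_Gamma_mul_cpow_eq (hw : w.re < 1) (hα : α ≠ 0) (K : ℕ) (p : ℕ → ℂ) :
    ∑ k ∈ range (K + 1), p k * (Gamma (k + 1 - w) * α ^ (-(k + 1 - w))) =
      Gamma (1 - w) * α ^ w * ∑ k ∈ range (K + 1),
        (∑ ℓ ∈ Icc k K, nuCoeff k ℓ * α ^ (-1 - (ℓ : ℂ)) * p ℓ) * w ^ k := by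
  calc _ = Gamma (1 - w) * α ^ w * ∑ k ∈ range (K + 1), ∑ ℓ ∈ range (k + 1),
        nuCoeff ℓ k * α ^ (-1 - (k : ℂ)) * p k * w ^ ℓ := by
        rw [mul_sum]
        refine sum_congr rfl fun k _ => ?_
        rw [Gamma_natCast_add_one_sub hw, prod_Icc_natCast_sub_eq_sum_nuCoeff,
          show -((k : ℂ) + 1 - w) = w + (-1 - k) by ring, cpow_add _ _ hα]
        simp only [sum_mul, mul_sum]
        exact sum_congr rfl fun ℓ _ => by ring
    _ = _ := by
        rw [sum_comm' (t' := range (K + 1)) (s' := fun ℓ => Icc ℓ K)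
          (fun k ℓ => by simp only [Finset.mem_range, Finset.mem_Icc]; omega)]
        simp only [sum_mul]

end PolynomialKernel

/-- Let `P(z) = Σ_{k=0}^{K} p_k z^k` and `Re α > 0`, and set
`q_k = Σ_{ℓ=k}^{K} ν_{k,ℓ} α^{−1−ℓ} p_ℓ`.  Then for every `ξ ∈ ℝ`,
`(∫₀^∞ P(t) e^{−αt} t^{−iξ} dt) / (∫₀^∞ e^{−t} t^{−iξ} dt) = α^{iξ} Σ_{k=0}^{K} q_k (iξ)^k`
(principal powers of `α`, `t^{−iξ} = e^{−iξ log t}`). -/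
theorem b_function_of_polynomial_kernel (K : ℕ) (p : ℕ → ℂ) (α : ℂ) (hα : 0 < α.re)
    (ξ : ℝ) :
    (∫ t in Set.Ioi (0 : ℝ),
          (∑ k ∈ Finset.range (K + 1), p k * (t : ℂ) ^ k) * Complex.exp (-α * t) *
            Complex.exp (-(Complex.I * ξ) * Real.log t)) /
        (∫ t in Set.Ioi (0 : ℝ), Complex.exp (-(t : ℂ)) *
          Complex.exp (-(Complex.I * ξ) * Real.log t)) =
      α ^ (Complex.I * ξ) *
        ∑ k ∈ Finset.range (K + 1),
          (∑ ℓ ∈ Finset.Icc k K, nuCoeff k ℓ * α ^ (-1 - (ℓ : ℂ)) * p ℓ) *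
            (Complex.I * ξ) ^ k := by
  set w : ℂ := I * ξ
  have hw : w.re < 1 := by simp [w]
  have hα0 : α ≠ 0 := fun h => by simp [h] at hα
  have numerator : ∫ t in Ioi (0 : ℝ), (∑ k ∈ range (K + 1), p k * (t : ℂ) ^ k) *
      exp (-α * t) * exp (-w * Real.log t) =
      ∑ k ∈ range (K + 1), p k * (Gamma (k + 1 - w) * α ^ (-(k + 1 - w))) := by
    calc _ = ∫ t in Ioi (0 : ℝ), ∑ k ∈ range (K + 1),
          p k * ((t : ℂ) ^ k * exp (-α * t) * exp (-w * Real.log t)) := by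
          congr 1 with t
          simp only [sum_mul]
          exact sum_congr rfl fun k _ => by ring
      _ = _ := by
          rw [integral_finsetSum _ fun k _ =>
            (integrableOn_pow_mul_exp_mul_exp_log hw hα k).const_mul (p k)]
          simp only [integral_const_mul, integral_pow_mul_exp_mul_exp_log hw hα]
  have denominator : ∫ t in Ioi (0 : ℝ), exp (-(t : ℂ)) * exp (-w * Real.log t) =
      Gamma (1 - w) := by
    simpa using integral_pow_mul_exp_mul_exp_log hw (α := 1) one_pos 0
  rw [numerator, denominator, sum_mul_Gamma_mul_cpow_eq hw hα0, mul_assoc,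
    mul_div_cancel_left₀ _ (Gamma_ne_zero_of_re_pos (by simp [w]))]
end

section
/- Let K ∈ ℕ and let S be a Hermitian complex matrix of order K+1 (indices 0, …, K) such that S_{j,ℓ} = 0 whenever j + ℓ > K and S_{j,K−j} ≠ 0 for every j = 0, …, K. Let N_+(S) (resp. N_-(S)) be the number of positive (resp. negative) eigenvalues of S counted with multiplicity. Then: if K is odd, N_+(S) = N_-(S) = (K+1)/2; if K is even and S_{K/2,K/2} > 0, then N_+(S) = K/2 + 1 and N_-(S) = K/2; if K is even and S_{K/2,K/2} < 0, then N_+(S) = K/2 and N_-(S) = K/2 + 1. -/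
/-!
Reversing the rows of `S` gives a lower triangular matrix with nonzero diagonal, so `det S ≠ 0`,
no eigenvalue vanishes, and `N₊ + N₋ = K + 1`.

If the form `x ↦ Re (x* A x)` of a Hermitian `A` is `≥ 0` on a subspace `W`, then the coordinates
of `x ∈ W` along the eigenvectors of eigenvalue `≥ 0` determine `x`, so `dim W + N₋ ≤ n`
(symmetrically for `≤ 0` and `N₊`). For `S`, on the vectors supported on the indices `≥ t` the form
only involves entries `S j ℓ` with `j, ℓ ≥ t`: it vanishes identically when `2t > K`, and for
`K = 2m`, `t = m` it reduces to `S m m |x m|²`. These subspaces of dimension `K + 1 - t`, together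
with `N₊ + N₋ = K + 1`, pin down `N₊` and `N₋`.
-/

open Matrix Finset Module

namespace Matrix

variable {𝕜 n : Type*} [RCLike 𝕜] [Fintype n] [DecidableEq n]

lemma re_star_dotProduct_conj_diagonal_mulVec (U : Matrix n n 𝕜) (d : n → ℝ) (x : n → 𝕜) :
    RCLike.re (star x ⬝ᵥ ((U * diagonal (RCLike.ofReal ∘ d) * star U) *ᵥ x)) =
      ∑ i, d i * ‖(star U *ᵥ x) i‖ ^ 2 := by
  set y := star U *ᵥ x
  have : star x ⬝ᵥ ((U * diagonal (RCLike.ofReal ∘ d) * star U) *ᵥ x) =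
      star y ⬝ᵥ (diagonal (RCLike.ofReal ∘ d) *ᵥ y) := by
    rw [← mulVec_mulVec, ← mulVec_mulVec, dotProduct_mulVec, star_mulVec, star_eq_conjTranspose,
      conjTranspose_conjTranspose]
    rfl
  rw [this]
  simp only [dotProduct, mulVec_diagonal, Pi.star_apply, Function.comp_apply, map_sum]
  refine Finset.sum_congr rfl fun i _ => ?_
  rw [mul_left_comm, RCLike.star_def, RCLike.conj_mul]
  norm_cast

lemma finrank_add_card_neg_le_of_eq_conj_diagonal {A : Matrix n n 𝕜} {U : unitaryGroup n 𝕜}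
    {d : n → ℝ}
    (hA : A = (U : Matrix n n 𝕜) * diagonal (RCLike.ofReal ∘ d) * star (U : Matrix n n 𝕜))
    (W : Submodule 𝕜 (n → 𝕜)) (hW : ∀ x ∈ W, 0 ≤ RCLike.re (star x ⬝ᵥ (A *ᵥ x))) :
    finrank 𝕜 W + #{i | d i < 0} ≤ Fintype.card n := by
  let coords : W →ₗ[𝕜] ({i // ¬ d i < 0} → 𝕜) :=
    LinearMap.funLeft 𝕜 𝕜 Subtype.val ∘ₗ (star (U : Matrix n n 𝕜)).mulVecLin ∘ₗ W.subtype
  have hinj : Function.Injective coords := by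
    rw [← LinearMap.ker_eq_bot, LinearMap.ker_eq_bot']
    rintro ⟨x, hx⟩ hcoords
    have hvanish : ∀ i, ¬ d i < 0 → (star (U : Matrix n n 𝕜) *ᵥ x) i = 0 :=
      fun i hi => congrFun hcoords ⟨i, hi⟩
    have hterm : ∀ i, d i * ‖(star (U : Matrix n n 𝕜) *ᵥ x) i‖ ^ 2 ≤ 0 := by
      intro i
      by_cases hi : d i < 0
      · exact mul_nonpos_of_nonpos_of_nonneg hi.le (by positivity)
      · simp [hvanish i hi]
    have hsum := hW x hx
    rw [hA, re_star_dotProduct_conj_diagonal_mulVec] at hsum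
    have hzero := (Finset.sum_eq_zero_iff_of_nonpos fun i _ => hterm i).mp
      (le_antisymm (Finset.sum_nonpos fun i _ => hterm i) hsum)
    have hy : star (U : Matrix n n 𝕜) *ᵥ x = 0 := by
      funext i
      by_cases hi : d i < 0
      · simpa [hi.ne] using hzero i (Finset.mem_univ i)
      · exact hvanish i hi
    have : x = 0 := by
      rw [← one_mulVec x, ← (mem_unitaryGroup_iff.mp U.2), ← mulVec_mulVec, hy, mulVec_zero]
    simpa using this
  have hle := LinearMap.finrank_le_finrank_of_injective hinj
  rw [finrank_fintype_fun_eq_card, Fintype.card_subtype] at hle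
  have := Finset.card_filter_add_card_filter_not (s := Finset.univ) (fun i => d i < 0)
  rw [Finset.card_univ] at this
  omega

namespace IsHermitian

variable {A : Matrix n n 𝕜} (hA : A.IsHermitian)
include hA

lemma eq_conj_diagonal_eigenvalues :
    A = (hA.eigenvectorUnitary : Matrix n n 𝕜) * diagonal (RCLike.ofReal ∘ hA.eigenvalues) *
      star (hA.eigenvectorUnitary : Matrix n n 𝕜) := by
  conv_lhs => rw [hA.spectral_theorem, Unitary.conjStarAlgAut_apply]

lemma finrank_add_card_neg_le (W : Submodule 𝕜 (n → 𝕜))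
    (hW : ∀ x ∈ W, 0 ≤ RCLike.re (star x ⬝ᵥ (A *ᵥ x))) :
    finrank 𝕜 W + #{i | hA.eigenvalues i < 0} ≤ Fintype.card n :=
  finrank_add_card_neg_le_of_eq_conj_diagonal hA.eq_conj_diagonal_eigenvalues W hW

lemma finrank_add_card_pos_le (W : Submodule 𝕜 (n → 𝕜))
    (hW : ∀ x ∈ W, RCLike.re (star x ⬝ᵥ (A *ᵥ x)) ≤ 0) :
    finrank 𝕜 W + #{i | 0 < hA.eigenvalues i} ≤ Fintype.card n := by
  have hneg : -A = (hA.eigenvectorUnitary : Matrix n n 𝕜) *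
      diagonal (RCLike.ofReal ∘ (-hA.eigenvalues)) *
        star (hA.eigenvectorUnitary : Matrix n n 𝕜) := by
    conv_lhs => rw [hA.eq_conj_diagonal_eigenvalues]
    have hdiag : diagonal (RCLike.ofReal ∘ (-hA.eigenvalues)) =
        -diagonal (RCLike.ofReal ∘ hA.eigenvalues : n → 𝕜) := by
      ext i j
      by_cases h : i = j <;> simp [h]
    rw [hdiag, Matrix.mul_neg, Matrix.neg_mul]
  simpa using finrank_add_card_neg_le_of_eq_conj_diagonal hneg W
    (fun x hx => by simpa [neg_mulVec] using hW x hx)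

lemma card_pos_add_card_neg (hdet : A.det ≠ 0) :
    #{i | 0 < hA.eigenvalues i} + #{i | hA.eigenvalues i < 0} = Fintype.card n := by
  have hne : ∀ i, hA.eigenvalues i ≠ 0 := fun i hi =>
    hdet (by rw [hA.det_eq_prod_eigenvalues]; exact prod_eq_zero (mem_univ i) (by simp [hi]))
  rw [← Finset.card_univ,
    ← Finset.card_filter_add_card_filter_not (s := univ) (fun i => 0 < hA.eigenvalues i)]
  congr 2
  ext i
  simp only [mem_filter, mem_univ, true_and, not_lt]
  exact (hne i).le_iff_lt.symm

end IsHermitian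

end Matrix

def tailSubspace (R : Type*) [Semiring R] (n t : ℕ) : Submodule R (Fin n → R) :=
  ⨅ j ∈ {j : Fin n | (j : ℕ) < t}, LinearMap.ker (LinearMap.proj j)

section tailSubspace

variable {R : Type*} {n t : ℕ}

lemma mem_tailSubspace [Semiring R] {x : Fin n → R} :
    x ∈ tailSubspace R n t ↔ ∀ j : Fin n, (j : ℕ) < t → x j = 0 := by
  simp [tailSubspace]

lemma finrank_tailSubspace [Ring R] [StrongRankCondition R] :
    finrank R (tailSubspace R n t) = n - t := by
  classical
  rw [tailSubspace, (LinearMap.iInfKerProjEquiv R (fun _ => R)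
    (disjoint_compl_left (a := {j : Fin n | (j : ℕ) < t})) (by simp)).finrank_eq,
    finrank_fintype_fun_eq_card, ← Set.toFinset_card]
  simp only [Set.toFinset_compl, Set.toFinset_ofPred, card_compl, Fintype.card_fin,
    Fin.card_filter_val_lt]
  omega

end tailSubspace

section SkewTriangular

variable {R : Type*} {K : ℕ} {S : Matrix (Fin (K + 1)) (Fin (K + 1)) R}

lemma det_ne_zero_of_skewTriangular [CommRing R] [IsDomain R]
    (hskew : ∀ j ℓ : Fin (K + 1), K < (j : ℕ) + (ℓ : ℕ) → S j ℓ = 0)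
    (hdiag : ∀ j : Fin (K + 1),
      S j ⟨K - (j : ℕ), Nat.lt_succ_of_le (Nat.sub_le K j)⟩ ≠ 0) :
    S.det ≠ 0 := by
  have hlower : (S.submatrix Fin.revPerm id).IsLowerTriangular := by
    intro i j hij
    exact hskew _ _ (by simp [Fin.val_rev] at hij ⊢; omega)
  have hdet := det_permute Fin.revPerm S
  rw [det_of_isLowerTriangular _ hlower] at hdet
  intro hS
  rw [hS, mul_zero] at hdet
  obtain ⟨i, -, hi⟩ := Finset.prod_eq_zero_iff.mp hdet
  refine hdiag (Fin.rev i) ?_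
  rwa [show (⟨K - (Fin.rev i : ℕ), _⟩ : Fin (K + 1)) = i from
    Fin.ext (by simp only [Fin.val_rev]; omega)]

variable [CommSemiring R] [StarRing R] {t : ℕ} {x : Fin (K + 1) → R}

lemma star_mul_skewTriangular_mul_eq_zero
    (hskew : ∀ j ℓ : Fin (K + 1), K < (j : ℕ) + (ℓ : ℕ) → S j ℓ = 0)
    (hx : x ∈ tailSubspace R (K + 1) t) {j ℓ : Fin (K + 1)}
    (hjℓ : (j : ℕ) < t ∨ (ℓ : ℕ) < t ∨ K < (j : ℕ) + ℓ) :
    star (x j) * (S j ℓ * x ℓ) = 0 := by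
  rw [mem_tailSubspace] at hx
  rcases hjℓ with h | h | h
  · simp [hx j h]
  · simp [hx ℓ h]
  · simp [hskew j ℓ h]

lemma star_dotProduct_skewTriangular_mulVec_eq_zero
    (hskew : ∀ j ℓ : Fin (K + 1), K < (j : ℕ) + (ℓ : ℕ) → S j ℓ = 0)
    (ht : K < 2 * t) (hx : x ∈ tailSubspace R (K + 1) t) :
    star x ⬝ᵥ (S *ᵥ x) = 0 := by
  simp only [dotProduct, mulVec, Pi.star_apply, Finset.mul_sum]
  exact Finset.sum_eq_zero fun j _ => Finset.sum_eq_zero fun ℓ _ =>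
    star_mul_skewTriangular_mul_eq_zero hskew hx (by omega)

lemma star_dotProduct_skewTriangular_mulVec_eq_middle
    (hskew : ∀ j ℓ : Fin (K + 1), K < (j : ℕ) + (ℓ : ℕ) → S j ℓ = 0)
    {m : Fin (K + 1)} (hm : K = 2 * m) (hx : x ∈ tailSubspace R (K + 1) m) :
    star x ⬝ᵥ (S *ᵥ x) = star (x m) * (S m m * x m) := by
  simp only [dotProduct, mulVec, Pi.star_apply, Finset.mul_sum]
  rw [Fintype.sum_eq_single m, Fintype.sum_eq_single m]
  · intro ℓ hℓ
    exact star_mul_skewTriangular_mul_eq_zero hskew hx (by have := Fin.val_ne_of_ne hℓ; omega)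
  · intro j hj
    exact Finset.sum_eq_zero fun ℓ _ =>
      star_mul_skewTriangular_mul_eq_zero hskew hx (by have := Fin.val_ne_of_ne hj; omega)

end SkewTriangular

lemma Complex.re_star_mul_mul_self (a s : ℂ) :
    (star a * (s * a)).re = s.re * Complex.normSq a := by
  rw [mul_left_comm, Complex.star_def, ← Complex.normSq_eq_conj_mul_self, Complex.re_mul_ofReal]

/-- **Inertia of a Hermitian skew-triangular matrix with nonvanishing skew diagonal.**
Let `S` be Hermitian of order `K+1` with `S j ℓ = 0` for `j + ℓ > K` and
`S j (K−j) ≠ 0` for all `j`.  If `K` is odd then `S` has `(K+1)/2` positive and `(K+1)/2`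
negative eigenvalues; if `K` is even and the middle entry is positive (resp. negative)
then `S` has `K/2+1` positive and `K/2` negative (resp. `K/2` positive and `K/2+1`
negative) eigenvalues, counted with multiplicity. -/
theorem skew_triangular_inertia (K : ℕ) (S : Matrix (Fin (K + 1)) (Fin (K + 1)) ℂ)
    (hS : S.IsHermitian)
    (hskew : ∀ j ℓ : Fin (K + 1), K < (j : ℕ) + (ℓ : ℕ) → S j ℓ = 0)
    (hdiag : ∀ j : Fin (K + 1),
      S j ⟨K - (j : ℕ), Nat.lt_succ_of_le (Nat.sub_le K j)⟩ ≠ 0) :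
    (Odd K →
      (Finset.univ.filter fun i => 0 < hS.eigenvalues i).card = (K + 1) / 2 ∧
      (Finset.univ.filter fun i => hS.eigenvalues i < 0).card = (K + 1) / 2) ∧
    (Even K → 0 < (S ⟨K / 2, Nat.lt_succ_of_le (Nat.div_le_self K 2)⟩
        ⟨K / 2, Nat.lt_succ_of_le (Nat.div_le_self K 2)⟩).re →
      (Finset.univ.filter fun i => 0 < hS.eigenvalues i).card = K / 2 + 1 ∧
      (Finset.univ.filter fun i => hS.eigenvalues i < 0).card = K / 2) ∧
    (Even K → (S ⟨K / 2, Nat.lt_succ_of_le (Nat.div_le_self K 2)⟩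
        ⟨K / 2, Nat.lt_succ_of_le (Nat.div_le_self K 2)⟩).re < 0 →
      (Finset.univ.filter fun i => 0 < hS.eigenvalues i).card = K / 2 ∧
      (Finset.univ.filter fun i => hS.eigenvalues i < 0).card = K / 2 + 1) := by
  have hsum := hS.card_pos_add_card_neg (det_ne_zero_of_skewTriangular hskew hdiag)
  have hpos := hS.finrank_add_card_pos_le
  have hneg := hS.finrank_add_card_neg_le
  simp only [Fintype.card_fin] at hsum hpos hneg
  have hiso {t : ℕ} (ht : K < 2 * t) :
      K + 1 - t + #{i | 0 < hS.eigenvalues i} ≤ K + 1 ∧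
        K + 1 - t + #{i | hS.eigenvalues i < 0} ≤ K + 1 := by
    have hzero {x} (hx : x ∈ tailSubspace ℂ (K + 1) t) :
        RCLike.re (star x ⬝ᵥ (S *ᵥ x)) = 0 := by
      rw [star_dotProduct_skewTriangular_mulVec_eq_zero hskew ht hx, map_zero]
    rw [← finrank_tailSubspace (R := ℂ)]
    exact ⟨hpos _ fun x hx => (hzero hx).le, hneg _ fun x hx => (hzero hx).ge⟩
  set m : Fin (K + 1) := ⟨K / 2, Nat.lt_succ_of_le (Nat.div_le_self K 2)⟩
  have hmiddle (hK : Even K) {x} (hx : x ∈ tailSubspace ℂ (K + 1) m) :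
      RCLike.re (star x ⬝ᵥ (S *ᵥ x)) = (S m m).re * Complex.normSq (x m) := by
    rw [star_dotProduct_skewTriangular_mulVec_eq_middle hskew
      (Nat.two_mul_div_two_of_even hK).symm hx]
    exact Complex.re_star_mul_mul_self _ _
  have htail : finrank ℂ (tailSubspace ℂ (K + 1) m) = K + 1 - K / 2 := finrank_tailSubspace
  refine ⟨fun hK => ?_, fun hK hm => ?_, fun hK hm => ?_⟩
  · have := hiso (t := (K + 1) / 2) (by obtain ⟨k, rfl⟩ := hK; omega)
    omega
  · have := hneg (tailSubspace ℂ (K + 1) m) fun x hx => by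
      rw [hmiddle hK hx]; exact mul_nonneg hm.le (Complex.normSq_nonneg _)
    have := hiso (t := K / 2 + 1) (by omega)
    omega
  · have := hpos (tailSubspace ℂ (K + 1) m) fun x hx => by
      rw [hmiddle hK hx]; exact mul_nonpos_of_nonpos_of_nonneg hm.le (Complex.normSq_nonneg _)
    have := hiso (t := K / 2 + 1) (by omega)
    omega
end

section
/- Let β₁, …, β_M ∈ ℂ be pairwise distinct and K₁, …, K_M ∈ ℕ. Then there exist functions ψ_{k,m} ∈ 𝒵, for m = 1, …, M and k = 0, …, K_m, such that the l-th complex derivative satisfies ψ_{k,m}^{(l)}(β_n) = δ_{m,n} δ_{k,l} for all n = 1, …, M and l = 0, …, K_m. -/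
/-!
For a smooth `g` supported in `[-R, R]`, the function `φ(z) = ∫ g(t) e^{itz} dt` is entire
with `|φ(z)| ≤ ‖g‖₁ e^{R|Im z|}`, and `n` integrations by parts give
`(-iz)ⁿ φ(z) = ∫ g⁽ⁿ⁾(t) e^{itz} dt`, so `φ ∈ 𝒵`; modulating `g` makes `φ(β_m) ≠ 0`.
Since `𝒵` is stable under multiplication by polynomials, `E = ∏_{i ≠ m} (z - β_i)^{K+1} φ`
lies in `𝒵`, is nonzero at `β_m` and vanishes to order `K + 1` at every other `β_n`.
The matrix `(∂ˡ((z - β_m)ʲ E)(β_m))_{l,j ≤ K}` is lower triangular with diagonal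
`j! E(β_m) ≠ 0`, so some polynomial multiple `P E` has any prescribed derivatives of order
`≤ K` at `β_m`.
-/

/-- The class `𝒵`: entire functions `φ : ℂ → ℂ` such that for some `r > 0` and every
`n ∈ ℕ` there is a constant `C_n` with `|φ(z)| ≤ C_n (1+|z|)^{−n} e^{r|Im z|}`. -/
def MemZClass (φ : ℂ → ℂ) : Prop :=
  Differentiable ℂ φ ∧
    ∃ r : ℝ, 0 < r ∧ ∀ n : ℕ, ∃ C : ℝ, ∀ z : ℂ,
      ‖φ z‖ ≤ C * ((1 + ‖z‖) ^ n)⁻¹ * Real.exp (r * |z.im|)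

open Complex MeasureTheory Metric Function Polynomial
open scoped ContDiff

theorem memZClass_iff {φ : ℂ → ℂ} :
    MemZClass φ ↔ Differentiable ℂ φ ∧ ∃ r : ℝ, 0 < r ∧ ∀ n : ℕ, ∃ C : ℝ, ∀ z : ℂ,
      (1 + ‖z‖) ^ n * ‖φ z‖ ≤ C * Real.exp (r * |z.im|) := by
  refine and_congr_right fun _ ↦ exists_congr fun r ↦ and_congr_right fun _ ↦
    forall_congr' fun n ↦ exists_congr fun C ↦ forall_congr' fun z ↦ ?_
  have hpos : 0 < (1 + ‖z‖) ^ n := by positivity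
  rw [mul_right_comm, ← div_eq_mul_inv, le_div_iff₀ hpos, mul_comm]

theorem MemZClass.of_norm_pow_mul_le {φ : ℂ → ℂ} (hφ : Differentiable ℂ φ) {r : ℝ} (hr : 0 < r)
    (h : ∀ n : ℕ, ∃ C : ℝ, ∀ z : ℂ, ‖z‖ ^ n * ‖φ z‖ ≤ C * Real.exp (r * |z.im|)) :
    MemZClass φ := by
  refine memZClass_iff.mpr ⟨hφ, r, hr, fun n ↦ ?_⟩
  obtain ⟨C₀, h₀⟩ := h 0
  obtain ⟨C, hC⟩ := h n
  refine ⟨2 ^ (n - 1) * (C₀ + C), fun z ↦ ?_⟩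
  calc (1 + ‖z‖) ^ n * ‖φ z‖ ≤ 2 ^ (n - 1) * (1 ^ n + ‖z‖ ^ n) * ‖φ z‖ := by
        gcongr; exact add_pow_le zero_le_one (norm_nonneg z) n
    _ = 2 ^ (n - 1) * (‖z‖ ^ 0 * ‖φ z‖ + ‖z‖ ^ n * ‖φ z‖) := by ring
    _ ≤ 2 ^ (n - 1) * (C₀ * Real.exp (r * |z.im|) + C * Real.exp (r * |z.im|)) :=
        mul_le_mul_of_nonneg_left (add_le_add (h₀ z) (hC z)) (by positivity)
    _ = 2 ^ (n - 1) * (C₀ + C) * Real.exp (r * |z.im|) := by ring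

theorem MemZClass.add {φ ψ : ℂ → ℂ} (hφ : MemZClass φ) (hψ : MemZClass ψ) :
    MemZClass (fun z ↦ φ z + ψ z) := by
  obtain ⟨hφd, r₁, hr₁, hφb⟩ := memZClass_iff.mp hφ
  obtain ⟨hψd, r₂, hr₂, hψb⟩ := memZClass_iff.mp hψ
  refine memZClass_iff.mpr ⟨hφd.add hψd, max r₁ r₂, lt_max_of_lt_left hr₁, fun n ↦ ?_⟩
  obtain ⟨C₁, h₁⟩ := hφb n
  obtain ⟨C₂, h₂⟩ := hψb n
  have hC₁ : 0 ≤ C₁ := by simpa using (by positivity : (0 : ℝ) ≤ _).trans (h₁ 0)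
  have hC₂ : 0 ≤ C₂ := by simpa using (by positivity : (0 : ℝ) ≤ _).trans (h₂ 0)
  have hexp {r : ℝ} (hr : r ≤ max r₁ r₂) (z : ℂ) :
      Real.exp (r * |z.im|) ≤ Real.exp (max r₁ r₂ * |z.im|) := by
    gcongr
  refine ⟨C₁ + C₂, fun z ↦ ?_⟩
  calc (1 + ‖z‖) ^ n * ‖φ z + ψ z‖ ≤ (1 + ‖z‖) ^ n * ‖φ z‖ + (1 + ‖z‖) ^ n * ‖ψ z‖ := by
        rw [← mul_add]; gcongr; exact norm_add_le _ _
    _ ≤ C₁ * Real.exp (max r₁ r₂ * |z.im|) + C₂ * Real.exp (max r₁ r₂ * |z.im|) :=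
        add_le_add ((h₁ z).trans (mul_le_mul_of_nonneg_left (hexp (le_max_left _ _) z) hC₁))
          ((h₂ z).trans (mul_le_mul_of_nonneg_left (hexp (le_max_right _ _) z) hC₂))
    _ = (C₁ + C₂) * Real.exp (max r₁ r₂ * |z.im|) := by ring

theorem MemZClass.const_mul {φ : ℂ → ℂ} (hφ : MemZClass φ) (a : ℂ) :
    MemZClass (fun z ↦ a * φ z) := by
  obtain ⟨hφd, r, hr, hφb⟩ := memZClass_iff.mp hφ
  refine memZClass_iff.mpr ⟨hφd.const_mul a, r, hr, fun n ↦ ?_⟩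
  obtain ⟨C, h⟩ := hφb n
  refine ⟨‖a‖ * C, fun z ↦ ?_⟩
  rw [norm_mul, mul_left_comm, mul_assoc]
  exact mul_le_mul_of_nonneg_left (h z) (norm_nonneg a)

theorem MemZClass.id_mul {φ : ℂ → ℂ} (hφ : MemZClass φ) : MemZClass (fun z ↦ z * φ z) := by
  obtain ⟨hφd, r, hr, hφb⟩ := memZClass_iff.mp hφ
  refine memZClass_iff.mpr ⟨differentiable_id.mul hφd, r, hr, fun n ↦ ?_⟩
  obtain ⟨C, h⟩ := hφb (n + 1)
  refine ⟨C, fun z ↦ (h z).trans' ?_⟩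
  rw [norm_mul, pow_succ, mul_assoc]
  gcongr
  linarith

theorem MemZClass.eval_mul {φ : ℂ → ℂ} (hφ : MemZClass φ) (P : ℂ[X]) :
    MemZClass (fun z ↦ P.eval z * φ z) := by
  induction P using Polynomial.induction_on generalizing φ with
  | C a => simpa using hφ.const_mul a
  | add P Q hP hQ => simpa [add_mul] using (hP hφ).add (hQ hφ)
  | monomial n a h => simpa [pow_succ, mul_assoc] using h hφ.id_mul

noncomputable def fourierLaplace (g : ℝ → ℂ) (z : ℂ) : ℂ := ∫ t : ℝ, g t * cexp (I * t * z)

section FourierLaplace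

theorem norm_cexp_I_mul_le {t R : ℝ} (ht : |t| ≤ R) (z : ℂ) :
    ‖cexp (I * t * z)‖ ≤ Real.exp (R * |z.im|) := by
  rw [norm_exp]
  gcongr
  calc (I * t * z).re = -(t * z.im) := by simp
    _ ≤ |t * z.im| := neg_le_abs _
    _ = |t| * |z.im| := abs_mul _ _
    _ ≤ R * |z.im| := by gcongr

theorem tsupport_iteratedDeriv_subset {𝕜 F : Type*} [NontriviallyNormedField 𝕜]
    [NormedAddCommGroup F] [NormedSpace 𝕜 F] (f : 𝕜 → F) (n : ℕ) :
    tsupport (iteratedDeriv n f) ⊆ tsupport f := by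
  induction n with
  | zero => simp
  | succ n ih => exact (iteratedDeriv_succ (f := f) ▸ tsupport_deriv_subset).trans ih

variable {g : ℝ → ℂ}

theorem norm_fourierLaplace_le (hg : Integrable g) {R : ℝ} (hR : support g ⊆ closedBall 0 R)
    (z : ℂ) : ‖fourierLaplace g z‖ ≤ (∫ t, ‖g t‖) * Real.exp (R * |z.im|) := by
  rw [← integral_mul_const]
  refine norm_integral_le_of_norm_le (hg.norm.mul_const _) (.of_forall fun t ↦ ?_)
  by_cases ht : g t = 0
  · simp [ht]
  rw [norm_mul]
  gcongr
  exact norm_cexp_I_mul_le (by simpa using hR ht) z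

theorem fourierLaplace_deriv (hg : ContDiff ℝ 1 g) (hc : HasCompactSupport g) (z : ℂ) :
    fourierLaplace (deriv g) z = -(I * z) * fourierLaplace g z := by
  have hint {u v : ℝ → ℂ} (hu : Continuous u) (huc : HasCompactSupport u) (hv : Continuous v) :
      Integrable (u * v) :=
    (hu.mul hv).integrable_of_hasCompactSupport huc.mul_right
  have hv (t : ℝ) : HasDerivAt (fun s : ℝ ↦ cexp (I * s * z)) (I * z * cexp (I * t * z)) t := by
    simpa [mul_comm, mul_assoc, mul_left_comm] using
      (((hasDerivAt_id (t : ℂ)).const_mul (I * z)).cexp).comp_ofReal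
  have hibp := integral_mul_deriv_eq_deriv_mul_of_integrable
    (fun t _ ↦ (hg.differentiable one_ne_zero t).hasDerivAt) (fun t _ ↦ hv t)
    (hint hg.continuous hc (by fun_prop)) (hint (hg.continuous_deriv le_rfl) hc.deriv (by fun_prop))
    (hint hg.continuous hc (by fun_prop))
  calc fourierLaplace (deriv g) z = -∫ t, g t * (I * z * cexp (I * t * z)) := by
        rw [hibp, neg_neg]; rfl
    _ = -(I * z) * fourierLaplace g z := by
        rw [neg_mul, fourierLaplace, ← integral_const_mul]
        congr 2 with t
        ring

theorem fourierLaplace_iteratedDeriv (hg : ContDiff ℝ ∞ g) (hc : HasCompactSupport g) (n : ℕ)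
    (z : ℂ) : fourierLaplace (iteratedDeriv n g) z = (-(I * z)) ^ n * fourierLaplace g z := by
  induction n with
  | zero => simp
  | succ n ih =>
    have hgn : ContDiff ℝ 1 (iteratedDeriv n g) := by
      rw [iteratedDeriv_eq_iterate]
      exact (hg.iterate_deriv n).of_le (by simp)
    have hcn : HasCompactSupport (iteratedDeriv n g) :=
      hc.mono' ((subset_tsupport _).trans (tsupport_iteratedDeriv_subset g n))
    rw [iteratedDeriv_succ, fourierLaplace_deriv hgn hcn, ih, pow_succ']
    ring

theorem differentiable_fourierLaplace (hg : Continuous g) (hc : HasCompactSupport g) :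
    Differentiable ℂ (fourierLaplace g) := by
  intro z₀
  obtain ⟨R, hR⟩ := hc.isCompact.isBounded.subset_closedBall 0
  have hbound : ∀ t, ∀ z ∈ ball z₀ 1,
      ‖g t * (I * t * cexp (I * t * z))‖ ≤ ‖g t‖ * (R * Real.exp (R * (|z₀.im| + 1))) := by
    intro t z hz
    by_cases ht : g t = 0
    · simp [ht]
    have htR : |t| ≤ R := by simpa using hR (subset_tsupport _ ht)
    have him : |z.im| ≤ |z₀.im| + 1 := by
      have := (abs_im_le_norm (z - z₀)).trans (mem_ball_iff_norm.mp hz).le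
      rw [sub_im] at this
      linarith [abs_sub_abs_le_abs_sub z.im z₀.im]
    rw [norm_mul, norm_mul, norm_mul, norm_I, one_mul, norm_real, Real.norm_eq_abs]
    have hR0 : 0 ≤ R := (abs_nonneg t).trans htR
    refine mul_le_mul_of_nonneg_left (mul_le_mul htR ((norm_cexp_I_mul_le htR z).trans ?_)
      (norm_nonneg _) hR0) (norm_nonneg _)
    gcongr
  have key := hasDerivAt_integral_of_dominated_loc_of_deriv_le (μ := volume)
    (F := fun z t ↦ g t * cexp (I * t * z)) (ball_mem_nhds z₀ one_pos)
    (.of_forall fun z ↦ (hg.mul (by fun_prop)).aestronglyMeasurable)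
    ((hg.mul (by fun_prop)).integrable_of_hasCompactSupport hc.mul_right)
    (hg.mul (by fun_prop)).aestronglyMeasurable (.of_forall hbound)
    ((hg.norm.integrable_of_hasCompactSupport hc.norm).mul_const _)
    (.of_forall fun t z _ ↦ (((hasDerivAt_id z).const_mul (I * t)).cexp.const_mul (g t)).congr_deriv
      (by simp [mul_comm]))
  exact key.2.differentiableAt

theorem memZClass_fourierLaplace (hg : ContDiff ℝ ∞ g) (hc : HasCompactSupport g) :
    MemZClass (fourierLaplace g) := by
  obtain ⟨R, hR⟩ := hc.isCompact.isBounded.subset_closedBall 0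
  refine MemZClass.of_norm_pow_mul_le (differentiable_fourierLaplace hg.continuous hc)
    (r := max R 1) (by positivity) fun n ↦ ⟨∫ t, ‖iteratedDeriv n g t‖, fun z ↦ ?_⟩
  have hsupp : support (iteratedDeriv n g) ⊆ closedBall 0 (max R 1) :=
    (subset_tsupport _).trans <| (tsupport_iteratedDeriv_subset g n).trans <|
      hR.trans (closedBall_subset_closedBall (le_max_left _ _))
  have hint : Integrable (iteratedDeriv n g) :=
    (hg.continuous_iteratedDeriv n (by exact_mod_cast le_top)).integrable_of_hasCompactSupport
      (hc.mono' ((subset_tsupport _).trans (tsupport_iteratedDeriv_subset g n)))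
  calc ‖z‖ ^ n * ‖fourierLaplace g z‖ = ‖fourierLaplace (iteratedDeriv n g) z‖ := by
        simp [fourierLaplace_iteratedDeriv hg hc]
    _ ≤ _ := norm_fourierLaplace_le hint hsupp z

end FourierLaplace

theorem exists_memZClass_apply_ne_zero (b : ℂ) : ∃ φ : ℂ → ℂ, MemZClass φ ∧ φ b ≠ 0 := by
  let ρ : ContDiffBump (0 : ℝ) := ⟨1, 2, one_pos, one_lt_two⟩
  let g : ℝ → ℂ := fun t ↦ ρ.normed volume t * cexp (-(I * t * b))
  have hg : ContDiff ℝ ∞ g := (ofRealCLM.contDiff.comp ρ.contDiff_normed).mul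
    ((contDiff_const.mul ofRealCLM.contDiff).mul contDiff_const).neg.cexp
  have hc : HasCompactSupport g :=
    (ρ.hasCompactSupport_normed.comp_left ofReal_zero).mul_right
  refine ⟨fourierLaplace g, memZClass_fourierLaplace hg hc, ?_⟩
  have : fourierLaplace g b = 1 := by
    simp [fourierLaplace, g, mul_assoc, ← Complex.exp_add, integral_complex_ofReal,
      ρ.integral_normed]
  simp [this]

section Hermite

variable {𝕜 : Type*} [NontriviallyNormedField 𝕜]

theorem Polynomial.contDiff_eval (P : 𝕜[X]) (n : WithTop ℕ∞) :
    ContDiff 𝕜 n (fun x ↦ P.eval x) := by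
  simpa using P.contDiff_aeval (𝕜 := 𝕜) n

theorem iteratedDeriv_sub_pow_mul {h : 𝕜 → 𝕜} {c : 𝕜} {l : ℕ} (hh : ContDiffAt 𝕜 l h c)
    (p : ℕ) :
    iteratedDeriv l (fun z ↦ (z - c) ^ p * h z) c =
      if p ≤ l then l.choose p * p.factorial * iteratedDeriv (l - p) h c else 0 := by
  have hpow (i : ℕ) :
      iteratedDeriv i (fun z ↦ (z - c) ^ p) c = if i = p then (p.factorial : 𝕜) else 0 := by
    simp only [iteratedDeriv_comp_sub_const i (· ^ p), sub_self, iteratedDeriv_fun_pow_zero,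
      Nat.cast_ite, Nat.cast_zero]
  rw [iteratedDeriv_fun_mul (by fun_prop) hh]
  simp only [hpow, mul_ite, ite_mul, mul_zero, zero_mul, Finset.sum_ite_eq', Finset.mem_range,
    Nat.lt_succ_iff]

theorem iteratedDeriv_sub_pow_mul_of_lt {h : 𝕜 → 𝕜} {c : 𝕜} {l p : ℕ} (hh : ContDiffAt 𝕜 l h c)
    (hlp : l < p) : iteratedDeriv l (fun z ↦ (z - c) ^ p * h z) c = 0 := by
  rw [iteratedDeriv_sub_pow_mul hh, if_neg hlp.not_ge]

theorem iteratedDeriv_sub_pow_mul_self {h : 𝕜 → 𝕜} {c : 𝕜} {p : ℕ} (hh : ContDiffAt 𝕜 p h c) :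
    iteratedDeriv p (fun z ↦ (z - c) ^ p * h z) c = p.factorial * h c := by
  simp [iteratedDeriv_sub_pow_mul hh]

theorem iteratedDeriv_eval_mul_eq_zero_of_dvd {P : 𝕜[X]} {h : 𝕜 → 𝕜} {c : 𝕜} {l p : ℕ}
    (hP : (X - C c) ^ p ∣ P) (hh : ContDiffAt 𝕜 l h c) (hlp : l < p) :
    iteratedDeriv l (fun z ↦ P.eval z * h z) c = 0 := by
  obtain ⟨R, rfl⟩ := hP
  have : (fun z ↦ ((X - C c) ^ p * R).eval z * h z) = fun z ↦ (z - c) ^ p * (R.eval z * h z) := by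
    ext z; simp [mul_assoc]
  rw [this, iteratedDeriv_sub_pow_mul_of_lt ((R.contDiff_eval _).contDiffAt.mul hh) hlp]

variable [CharZero 𝕜]

theorem exists_polynomial_iteratedDeriv_eval_mul_eq {E : 𝕜 → 𝕜} {c : 𝕜} {K k : ℕ}
    (hE : ContDiffAt 𝕜 K E c) (hEc : E c ≠ 0) (hk : k ≤ K) :
    ∃ P : 𝕜[X], ∀ l ≤ K, iteratedDeriv l (fun z ↦ P.eval z * E z) c = if k = l then 1 else 0 := by
  have hE' : ∀ l ≤ K, ContDiffAt 𝕜 l E c := fun l hl ↦ hE.of_le (by exact_mod_cast hl)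
  let D : Matrix (Fin (K + 1)) (Fin (K + 1)) 𝕜 := fun l j ↦
    iteratedDeriv l (fun z ↦ (z - c) ^ (j : ℕ) * E z) c
  have hD_lower : D.IsLowerTriangular := fun l j hlj ↦
    iteratedDeriv_sub_pow_mul_of_lt (hE' l l.is_le) hlj
  have hD_diag : ∀ j, D j j = (j : ℕ).factorial * E c := fun j ↦
    iteratedDeriv_sub_pow_mul_self (hE' j j.is_le)
  have hD_unit : IsUnit D := by
    rw [Matrix.isUnit_iff_isUnit_det, Matrix.det_of_isLowerTriangular D hD_lower,
      isUnit_iff_ne_zero]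
    simp [Finset.prod_ne_zero_iff, hD_diag, Nat.factorial_ne_zero, hEc]
  obtain ⟨a, ha⟩ := Matrix.mulVec_surjective_iff_isUnit.mpr hD_unit
    (Pi.single ⟨k, Nat.lt_succ_of_le hk⟩ 1)
  refine ⟨∑ j, C (a j) * (X - C c) ^ (j : ℕ), fun l hl ↦ ?_⟩
  calc iteratedDeriv l (fun z ↦ (∑ j, C (a j) * (X - C c) ^ (j : ℕ)).eval z * E z) c
      = iteratedDeriv l (fun z ↦ ∑ j, a j * ((z - c) ^ (j : ℕ) * E z)) c := by
        congr 1 with z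
        simp [eval_finsetSum, Finset.sum_mul, mul_assoc]
    _ = D.mulVec a ⟨l, Nat.lt_succ_of_le hl⟩ := by
        rw [iteratedDeriv_fun_sum (f := fun j z ↦ a j * ((z - c) ^ (j : ℕ) * E z))
          fun j _ ↦ contDiffAt_const.mul ((by fun_prop : ContDiffAt 𝕜 l (· - c) c).pow _
            |>.mul (hE' l hl))]
        simp [Matrix.mulVec, dotProduct, D, mul_comm]
    _ = if k = l then 1 else 0 := by
        simp [ha, Pi.single_apply, Fin.ext_iff, eq_comm]

end Hermite

theorem exists_memZClass_iteratedDeriv_eq_ite {ι : Type*} [Fintype ι] [DecidableEq ι]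
    {β : ι → ℂ} (hβ : Injective β) (m : ι) {K k : ℕ} (hk : k ≤ K) :
    ∃ ψ : ℂ → ℂ, MemZClass ψ ∧
      ∀ n, ∀ l ≤ K, iteratedDeriv l ψ (β n) = if m = n ∧ k = l then 1 else 0 := by
  obtain ⟨φ, hφ, hφm⟩ := exists_memZClass_apply_ne_zero (β m)
  let Q : ℂ[X] := ∏ i ∈ Finset.univ.erase m, (X - C (β i)) ^ (K + 1)
  have hQm : Q.eval (β m) ≠ 0 := by
    simp only [Q, eval_prod, eval_pow, eval_sub, eval_X, eval_C]
    exact Finset.prod_ne_zero_iff.mpr fun i hi ↦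
      pow_ne_zero _ (sub_ne_zero.mpr (hβ.ne (Finset.ne_of_mem_erase hi).symm))
  obtain ⟨P, hP⟩ := exists_polynomial_iteratedDeriv_eval_mul_eq
    (hφ.eval_mul Q).1.contDiff.contDiffAt (mul_ne_zero hQm hφm) hk
  refine ⟨fun z ↦ (P * Q).eval z * φ z, hφ.eval_mul (P * Q), fun n l hl ↦ ?_⟩
  obtain rfl | hmn := eq_or_ne m n
  · simpa [mul_assoc] using hP l hl
  · have hdvd : (X - C (β n)) ^ (K + 1) ∣ P * Q :=
      dvd_mul_of_dvd_right (Finset.dvd_prod_of_mem _ (by simp [hmn.symm])) P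
    rw [iteratedDeriv_eval_mul_eq_zero_of_dvd hdvd hφ.1.contDiff.contDiffAt (Nat.lt_succ_of_le hl),
      if_neg (by tauto)]

/-- **Hermite interpolation in the class `𝒵`.**  Given pairwise distinct points
`β 1, …, β M ∈ ℂ` and orders `K 1, …, K M ∈ ℕ`, there are functions `ψ (m, k) ∈ 𝒵`
(`k = 0, …, K m`) with `ψ (m, k)^{(l)} (β n) = δ_{m,n} δ_{k,l}` for all `n` and
`l = 0, …, K m`. -/
theorem zclass_interpolation (M : ℕ) (β : Fin M → ℂ) (hβ : Function.Injective β)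
    (K : Fin M → ℕ) :
    ∃ ψ : Fin M → ℕ → ℂ → ℂ,
      ∀ m : Fin M, ∀ k ≤ K m,
        MemZClass (ψ m k) ∧
        ∀ n : Fin M, ∀ l ≤ K m,
          iteratedDeriv l (ψ m k) (β n) = if m = n ∧ k = l then 1 else 0 := by
  choose! ψ hψ using fun m k (hk : k ≤ K m) ↦ exists_memZClass_iteratedDeriv_eq_ite hβ m hk
  exact ⟨ψ, hψ⟩
end

section
/- Let v : (0,∞) → (0,∞) satisfy √(v(a)·v(b)) / (v(a) + v(b)) = √(a·b) / (a + b) for all a, b > 0. Then either v(α) = v(1)·α for all α > 0, or v(α) = v(1)·α^{−1} for all α > 0. -/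
/-! Both sides of the equation are the function `t ↦ √t / (1 + t)` evaluated at the ratios `v a / v b`
and `a / b`; this function takes each value exactly at `t` and `t⁻¹`, so `v a / v b` is `a / b` or
`b / a`. Comparing with `b = 1` puts each point on the linear or on the inverse branch, and comparing
a point of one branch with a point of the other forces one of them to be `1`, which lies on both. -/

theorem sqrt_mul_div_add_eq_iff {x y a b : ℝ} (hx : 0 < x) (hy : 0 < y) (ha : 0 < a) (hb : 0 < b) :
    √(x * y) / (x + y) = √(a * b) / (a + b) ↔ x * b = y * a ∨ x * a = y * b := by
  have hsq : ∀ {s t : ℝ}, 0 < s → 0 < t → (√(s * t) / (s + t)) ^ 2 = s * t / (s + t) ^ 2 :=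
    fun hs ht => by rw [div_pow, Real.sq_sqrt (by positivity)]
  rw [← sq_eq_sq₀ (by positivity) (by positivity), hsq hx hy, hsq ha hb,
    div_eq_div_iff (by positivity) (by positivity)]
  have hfactor : x * y * (a + b) ^ 2 - a * b * (x + y) ^ 2 = -((x * b - y * a) * (x * a - y * b)) := by
    ring
  rw [← sub_eq_zero, hfactor, neg_eq_zero, mul_eq_zero, sub_eq_zero, sub_eq_zero]

theorem eq_mul_or_eq_mul_inv_of_ratio {v : ℝ → ℝ} (hv1 : v 1 ≠ 0)
    (hratio : ∀ a b : ℝ, 0 < a → 0 < b → v a * b = v b * a ∨ v a * a = v b * b) :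
    (∀ α : ℝ, 0 < α → v α = v 1 * α) ∨ (∀ α : ℝ, 0 < α → v α = v 1 * α⁻¹) := by
  by_contra! h
  obtain ⟨⟨a, ha, ha_not_lin⟩, ⟨b, hb, hb_not_inv⟩⟩ := h
  have hva : v a = v 1 * a⁻¹ := by
    rcases hratio a 1 ha one_pos with h | h
    · exact absurd (by linarith) ha_not_lin
    · field_simp; linarith
  have hvb : v b = v 1 * b := by
    rcases hratio b 1 hb one_pos with h | h
    · linarith
    · exact absurd (by field_simp; linarith) hb_not_inv
  rcases hratio a b ha hb with h | h
  · have ha1 : a = 1 := (pow_eq_one_iff_of_nonneg ha.le two_ne_zero).mp <| by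
      rw [hva, hvb] at h; field_simp at h; linarith
    exact ha_not_lin (by simp [ha1])
  · have hb1 : b = 1 := (pow_eq_one_iff_of_nonneg hb.le two_ne_zero).mp <| by
      rw [hva, hvb] at h; field_simp at h; linarith
    exact hb_not_inv (by simp [hb1])

/-- If `v : (0,∞) → (0,∞)` satisfies
`√(v a · v b) / (v a + v b) = √(a·b) / (a + b)` for all `a b > 0`,
then either `v α = v 1 · α` for all `α > 0`, or `v α = v 1 · α⁻¹` for all `α > 0`. -/
theorem functional_equation_dilation (v : ℝ → ℝ) (hv : ∀ a, 0 < a → 0 < v a)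
    (heq : ∀ a b : ℝ, 0 < a → 0 < b →
      Real.sqrt (v a * v b) / (v a + v b) = Real.sqrt (a * b) / (a + b)) :
    (∀ α : ℝ, 0 < α → v α = v 1 * α) ∨ (∀ α : ℝ, 0 < α → v α = v 1 * α⁻¹) :=
  eq_mul_or_eq_mul_inv_of_ratio (hv 1 one_pos).ne' fun a b ha hb =>
    (sqrt_mul_div_add_eq_iff (hv a ha) (hv b hb) ha hb).mp (heq a b ha hb)
end

section
/- The linear span of the family of functions {t ↦ e^{−αt} : α > 0} is dense in L²(0,∞). -/
/-!
If `f ∈ L²(0,∞)` is orthogonal to every `e^{-αt}`, then `g t = e^{-t} f t` is integrable and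
`∫ (e^{-t})ⁿ g t dt = 0` for all `n`. Since `e^{-t}` takes values in `[0, 1]`, the Weierstrass
approximation theorem upgrades this to `∫ b(e^{-t}) g t dt = 0` for every continuous `b`. Every
compactly supported continuous `φ` on `ℝ` is of the form `b(e^{-t})`, so `g`, and hence `f`,
vanishes almost everywhere. The orthogonal complement of the span is thus trivial.
-/

open MeasureTheory Set Real

section Moments

variable {X E : Type*} [MeasurableSpace X] {μ : Measure X} [NormedAddCommGroup E]
  [NormedSpace ℝ E] {u : X → ℝ} {h : X → E} {a b : ℝ}

lemma integrable_comp_smul_of_ae_mem_Icc {f : ℝ → ℝ} (hf : Continuous f)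
    (hu : AEStronglyMeasurable u μ) (hu_mem : ∀ᵐ x ∂μ, u x ∈ Icc a b) (hh : Integrable h μ) :
    Integrable (fun x => f (u x) • h x) μ := by
  obtain ⟨C, hC⟩ := isCompact_Icc.exists_bound_of_continuousOn hf.continuousOn
  exact hh.bdd_smul C (hf.comp_aestronglyMeasurable hu) (hu_mem.mono fun x hx => hC _ hx)

lemma integral_polynomial_comp_smul_eq_zero (p : Polynomial ℝ)
    (hu : AEStronglyMeasurable u μ) (hu_mem : ∀ᵐ x ∂μ, u x ∈ Icc a b) (hh : Integrable h μ)
    (hmom : ∀ n : ℕ, ∫ x, u x ^ n • h x ∂μ = 0) :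
    ∫ x, p.eval (u x) • h x ∂μ = 0 := by
  simp_rw [p.eval_eq_sum_range, Finset.sum_smul, mul_smul]
  rw [integral_finsetSum _ fun n _ =>
    (integrable_comp_smul_of_ae_mem_Icc (continuous_pow n) hu hu_mem hh).fun_smul _]
  simp [integral_smul, hmom]

theorem integral_comp_smul_eq_zero_of_moments_eq_zero {f : ℝ → ℝ} (hf : Continuous f)
    (hu : AEStronglyMeasurable u μ) (hu_mem : ∀ᵐ x ∂μ, u x ∈ Icc a b) (hh : Integrable h μ)
    (hmom : ∀ n : ℕ, ∫ x, u x ^ n • h x ∂μ = 0) :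
    ∫ x, f (u x) • h x ∂μ = 0 := by
  set M := ∫ x, ‖h x‖ ∂μ
  have hM : 0 ≤ M := integral_nonneg fun x => norm_nonneg _
  refine norm_le_zero_iff.1 (le_of_forall_pos_le_add fun ε hε => ?_)
  obtain ⟨p, hp⟩ := exists_polynomial_near_of_continuousOn a b f hf.continuousOn
    (ε / (M + 1)) (by positivity)
  have hdiff : ∫ x, f (u x) • h x ∂μ = ∫ x, (f (u x) - p.eval (u x)) • h x ∂μ := by
    simp_rw [sub_smul]
    rw [integral_sub (integrable_comp_smul_of_ae_mem_Icc hf hu hu_mem hh)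
      (integrable_comp_smul_of_ae_mem_Icc p.continuous hu hu_mem hh),
      integral_polynomial_comp_smul_eq_zero p hu hu_mem hh hmom, sub_zero]
  calc ‖∫ x, f (u x) • h x ∂μ‖ ≤ ∫ x, ε / (M + 1) * ‖h x‖ ∂μ := by
        rw [hdiff]
        refine norm_integral_le_of_norm_le (hh.norm.const_mul _) (hu_mem.mono fun x hx => ?_)
        rw [norm_smul, Real.norm_eq_abs, abs_sub_comm]
        gcongr
        exact (hp _ hx).le
    _ = ε / (M + 1) * M := integral_const_mul _ _
    _ ≤ 0 + ε := by
        rw [zero_add, div_mul_eq_mul_div, div_le_iff₀ (by positivity)]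
        nlinarith

end Moments

lemma HasCompactSupport.exists_continuous_comp_exp_neg_eq {E : Type*} [NormedAddCommGroup E]
    {φ : ℝ → E} (hsupp : HasCompactSupport φ) (hφ : Continuous φ) :
    ∃ b : ℝ → E, Continuous b ∧ ∀ t, b (rexp (-t)) = φ t := by
  obtain ⟨R, -, hR⟩ := hsupp.exists_pos_le_norm
  refine ⟨fun x => φ (-log (max x (rexp (-R)))), ?_, fun t => ?_⟩
  · exact hφ.comp ((continuous_id.max continuous_const).log
      fun x => (exp_pos _).trans_le (le_max_right _ _) |>.ne').neg
  · rcases le_total (rexp (-R)) (rexp (-t)) with hle | hle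
    · simp [max_eq_left hle]
    · have hRt : R ≤ t := by simpa using hle
      simp only [max_eq_right hle, log_exp, neg_neg]
      rw [hR R (le_abs_self R), hR t (hRt.trans (le_abs_self t))]

theorem ae_eq_zero_of_integral_exp_neg_nat_mul_smul_eq_zero {E : Type*} [NormedAddCommGroup E]
    [NormedSpace ℝ E] [CompleteSpace E] {F : ℝ → E}
    (hF : IntegrableOn (fun t => rexp (-t) • F t) (Ioi 0))
    (h : ∀ n : ℕ, ∫ t in Ioi 0, rexp (-((n + 1) * t)) • F t = 0) :
    ∀ᵐ t ∂volume.restrict (Ioi 0), F t = 0 := by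
  have hu_mem : ∀ᵐ t ∂volume.restrict (Ioi 0), rexp (-t) ∈ Icc (0 : ℝ) 1 :=
    (ae_restrict_mem measurableSet_Ioi).mono fun t (ht : 0 < t) =>
      ⟨(exp_pos _).le, exp_le_one_iff.2 (by linarith)⟩
  have hmom : ∀ n : ℕ, ∫ t in Ioi 0, rexp (-t) ^ n • rexp (-t) • F t = 0 := fun n => by
    simpa only [smul_smul, ← exp_nat_mul, ← exp_add, neg_add, mul_neg, add_mul, one_mul]
      using h n
  have hg : ∀ᵐ t ∂volume.restrict (Ioi 0), rexp (-t) • F t = 0 := by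
    refine ae_eq_zero_of_integral_contDiff_smul_eq_zero hF.locallyIntegrable fun φ hφ hsupp => ?_
    obtain ⟨b, hb, hbφ⟩ := hsupp.exists_continuous_comp_exp_neg_eq hφ.continuous
    simp_rw [← hbφ]
    exact integral_comp_smul_eq_zero_of_moments_eq_zero hb
      (by fun_prop : Continuous fun t : ℝ => rexp (-t)).aestronglyMeasurable hu_mem hF hmom
  filter_upwards [hg] with t ht
  exact (smul_eq_zero.1 ht).resolve_left (exp_pos _).ne'

section ExponentialsInL2

variable {α : ℝ}

lemma memLp_cexp_neg_mul (hα : 0 < α) :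
    MemLp (fun t : ℝ => Complex.exp (-(α : ℂ) * t)) 2 (volume.restrict (Ioi 0)) := by
  have hcont : Continuous fun t : ℝ => Complex.exp (-(α : ℂ) * t) := by fun_prop
  refine (memLp_two_iff_integrable_sq_norm hcont.aestronglyMeasurable).2 ?_
  have hsq : ∀ t : ℝ, ‖Complex.exp (-(α : ℂ) * t)‖ ^ 2 = rexp (-(2 * α) * t) := fun t => by
    rw [Complex.norm_exp, ← exp_nat_mul]
    congr 1
    simp
    ring
  simp_rw [hsq]
  exact exp_neg_integrableOn_Ioi 0 (by positivity)

lemma inner_cexp_neg_mul (t : ℝ) (z : ℂ) :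
    inner ℂ (Complex.exp (-(α : ℂ) * t)) z = rexp (-(α * t)) • z := by
  simp [Complex.real_smul, ← Complex.exp_conj, Complex.ofReal_exp, mul_comm]

lemma inner_toLp_cexp_neg_mul_ae_eq (hα : 0 < α) (f : Lp ℂ 2 (volume.restrict (Ioi (0 : ℝ)))) :
    (fun t => inner ℂ ((memLp_cexp_neg_mul hα).toLp _ t) (f t))
      =ᵐ[volume.restrict (Ioi 0)] fun t => rexp (-(α * t)) • f t := by
  filter_upwards [(memLp_cexp_neg_mul hα).coeFn_toLp] with t ht
  rw [ht, inner_cexp_neg_mul]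

lemma integrableOn_exp_neg_mul_smul_Lp (hα : 0 < α)
    (f : Lp ℂ 2 (volume.restrict (Ioi (0 : ℝ)))) :
    IntegrableOn (fun t => rexp (-(α * t)) • f t) (Ioi 0) :=
  (L2.integrable_inner _ f).congr (inner_toLp_cexp_neg_mul_ae_eq hα f)

lemma inner_toLp_cexp_neg_mul (hα : 0 < α) (f : Lp ℂ 2 (volume.restrict (Ioi (0 : ℝ)))) :
    inner ℂ ((memLp_cexp_neg_mul hα).toLp _) f = ∫ t in Ioi 0, rexp (-(α * t)) • f t := by
  rw [L2.inner_def]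
  exact integral_congr_ae (inner_toLp_cexp_neg_mul_ae_eq hα f)

end ExponentialsInL2

/-- The linear span of the exponentials `t ↦ e^{−αt}`, `α > 0`, is dense in `L²(0,∞)`. -/
theorem span_exponentials_dense :
    Dense (↑(Submodule.span ℂ
      {g : Lp ℂ 2 (volume.restrict (Set.Ioi (0 : ℝ))) |
        ∃ α : ℝ, 0 < α ∧
          (g : ℝ → ℂ) =ᵐ[volume.restrict (Set.Ioi (0 : ℝ))]
            fun t : ℝ => Complex.exp (-(α : ℂ) * t)}) :
      Set (Lp ℂ 2 (volume.restrict (Set.Ioi (0 : ℝ))))) := by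
  rw [Submodule.dense_iff_topologicalClosure_eq_top, Submodule.topologicalClosure_eq_top_iff,
    Submodule.eq_bot_iff]
  intro f hf
  have hlaplace : ∀ α : ℝ, 0 < α → ∫ t in Ioi 0, rexp (-(α * t)) • f t = 0 := fun α hα => by
    rw [← inner_toLp_cexp_neg_mul hα f]
    exact (Submodule.mem_orthogonal _ f).1 hf _
      (Submodule.subset_span ⟨α, hα, (memLp_cexp_neg_mul hα).coeFn_toLp⟩)
  refine Lp.eq_zero_iff_ae_eq_zero.2 (ae_eq_zero_of_integral_exp_neg_nat_mul_smul_eq_zero ?_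
    fun n => hlaplace _ n.cast_add_one_pos)
  simpa using integrableOn_exp_neg_mul_smul_Lp one_pos f
end
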